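/- arXiv:2309.10611 — 10 statements merged into one kernel-verified Lean document; each statement's English description precedes it below -/
import Mathlib

section
/- Let (B,+,0,−) be a K-loop and define s(x,y) = y + (−x + y). Then s satisfies the symmetric-space identities: s(x,x) = x, s(s(x,y),y) = x, and s(s(x,z), s(y,z)) = s(s(x,y), z) for all x, y, z ∈ B. -/
/-!
Left translation by `s x y = y + (−x + y)` factors, by the left Bol identity, as
`L y ∘ L (−x) ∘ L y`, and the automorphic inverse property makes negation commute with `s`.
The involution and self-distributivity identities then reduce to cancelling
`−a + (a + w)` and `a + (−a + w)`.
-/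

section KLoop

variable {B : Type*} {add : B → B → B} {zero : B} {neg : B → B}

theorem neg_neg_of_left_inverse (h0r : ∀ a, add a zero = a)
    (hnl : ∀ a, add (neg a) a = zero) (hlinv : ∀ a x, add (neg a) (add a x) = x) (a : B) :
    neg (neg a) = a := by
  simpa only [hnl, h0r] using hlinv (neg a) a

theorem add_neg_add_cancel_of_left_inverse (h0r : ∀ a, add a zero = a)
    (hnl : ∀ a, add (neg a) a = zero) (hlinv : ∀ a x, add (neg a) (add a x) = x) (a w : B) :
    add a (add (neg a) w) = w := by
  simpa only [neg_neg_of_left_inverse h0r hnl hlinv] using hlinv (neg a) w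

variable {s : B → B → B}

theorem add_reflect_left (hbol : ∀ a b c, add a (add b (add a c)) = add (add a (add b a)) c)
    (hs : ∀ x y, s x y = add y (add (neg x) y)) (x y w : B) :
    add (s x y) w = add y (add (neg x) (add y w)) := by
  rw [hs, hbol]

theorem neg_reflect (h0r : ∀ a, add a zero = a)
    (haut : ∀ a b, neg (add a b) = add (neg a) (neg b))
    (hnl : ∀ a, add (neg a) a = zero) (hlinv : ∀ a x, add (neg a) (add a x) = x)
    (hs : ∀ x y, s x y = add y (add (neg x) y)) (x y : B) :
    neg (s x y) = s (neg x) (neg y) := by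
  rw [hs, hs, haut, haut, neg_neg_of_left_inverse h0r hnl hlinv]

theorem reflect_self (h0r : ∀ a, add a zero = a) (hnl : ∀ a, add (neg a) a = zero)
    (hs : ∀ x y, s x y = add y (add (neg x) y)) (x : B) :
    s x x = x := by
  rw [hs, hnl, h0r]

theorem reflect_reflect (h0r : ∀ a, add a zero = a)
    (hbol : ∀ a b c, add a (add b (add a c)) = add (add a (add b a)) c)
    (haut : ∀ a b, neg (add a b) = add (neg a) (neg b))
    (hnl : ∀ a, add (neg a) a = zero) (hlinv : ∀ a x, add (neg a) (add a x) = x)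
    (hs : ∀ x y, s x y = add y (add (neg x) y)) (x y : B) :
    s (s x y) y = x := by
  rw [hs (s x y) y, neg_reflect h0r haut hnl hlinv hs, add_reflect_left hbol hs,
    neg_neg_of_left_inverse h0r hnl hlinv, hnl, h0r,
    add_neg_add_cancel_of_left_inverse h0r hnl hlinv]

theorem reflect_right_self_distrib (h0r : ∀ a, add a zero = a)
    (hbol : ∀ a b c, add a (add b (add a c)) = add (add a (add b a)) c)
    (haut : ∀ a b, neg (add a b) = add (neg a) (neg b))
    (hnl : ∀ a, add (neg a) a = zero) (hlinv : ∀ a x, add (neg a) (add a x) = x)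
    (hs : ∀ x y, s x y = add y (add (neg x) y)) (x y z : B) :
    s (s x z) (s y z) = s (s x y) z := by
  have hneg := neg_reflect h0r haut hnl hlinv hs
  have hneg_neg := neg_neg_of_left_inverse h0r hnl hlinv
  calc s (s x z) (s y z)
      = add (s y z) (add (neg (s x z)) (s y z)) := hs _ _
    _ = add (s y z) (add (neg z) (add x (add (neg z) (s y z)))) := by
        rw [hneg, add_reflect_left hbol hs (neg x), hneg_neg]
    _ = add (s y z) (add (neg z) (add x (add (neg y) z))) := by
        rw [hs y z, hlinv]
    _ = add z (add (neg y) (add x (add (neg y) z))) := by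
        rw [add_reflect_left hbol hs, add_neg_add_cancel_of_left_inverse h0r hnl hlinv]
    _ = add z (add (neg (s x y)) z) := by
        rw [hneg, add_reflect_left hbol hs (neg x), hneg_neg]
    _ = s (s x y) z := (hs _ _).symm

end KLoop

theorem kloop_symmetric_space_identities_general {B : Type*}
    (add : B → B → B) (zero : B) (neg : B → B)
    (h0r : ∀ a, add a zero = a)
    (hbol : ∀ a b c, add a (add b (add a c)) = add (add a (add b a)) c)
    (haut : ∀ a b, neg (add a b) = add (neg a) (neg b))
    (hnl : ∀ a, add (neg a) a = zero)
    (hlinv : ∀ a x, add (neg a) (add a x) = x)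
    (s : B → B → B)
    (hs : ∀ x y, s x y = add y (add (neg x) y)) :
    (∀ x, s x x = x) ∧
    (∀ x y, s (s x y) y = x) ∧
    (∀ x y z, s (s x z) (s y z) = s (s x y) z) :=
  ⟨reflect_self h0r hnl hs, reflect_reflect h0r hbol haut hnl hlinv hs,
    reflect_right_self_distrib h0r hbol haut hnl hlinv hs⟩

/-- In a K-loop `(B,+,0,−)`, the operation `s(x,y) = y + (−x + y)`
satisfies the symmetric-space identities. -/
theorem kloop_symmetric_space_identities {B : Type*}
    (add : B → B → B) (zero : B) (neg : B → B)
    (h0l : ∀ a, add zero a = a)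
    (h0r : ∀ a, add a zero = a)
    (huniql : ∀ a b, ∃! x, add x a = b)
    (huniqr : ∀ a b, ∃! y, add a y = b)
    (hbol : ∀ a b c, add a (add b (add a c)) = add (add a (add b a)) c)
    (haut : ∀ a b, neg (add a b) = add (neg a) (neg b))
    (hnl : ∀ a, add (neg a) a = zero)
    (hnr : ∀ a, add a (neg a) = zero)
    (hlinv : ∀ a x, add (neg a) (add a x) = x)
    (s : B → B → B)
    (hs : ∀ x y, s x y = add y (add (neg x) y)) :
    (∀ x, s x x = x) ∧
    (∀ x y, s (s x y) y = x) ∧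
    (∀ x y z, s (s x z) (s y z) = s (s x y) z) :=
  kloop_symmetric_space_identities_general add zero neg h0r hbol haut hnl hlinv s hs
end

section
/- Let (B,+,0,−) be a uniquely 2-divisible K-loop and define s(x,y) = y + (−x + y). Then for all a, b ∈ B there exists a unique z ∈ B with s(a,z) = b. Consequently (B,s) is a symétron. -/
/-!
The maps `μ_a = subLeft a : c ↦ a + -c` are involutions, and the left Bol identity together
with the automorphic inverse property gives `μ_a ∘ μ_b ∘ μ_a = μ_{s(b,a)}`; moreover
`a ↦ μ_a` is injective since `μ_a 0 = a`. So `s` is carried faithfully to conjugation of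
involutions, where the symétron identities hold. For midpoints, write `a = u + u = s(0,u)`;
the distributive law conjugates `s(a,·)` by the involution `s(·,u)` into `s(0,·) = x ↦ x + x`,
which is bijective.
-/

/-- The equational axioms of a K-loop. -/
class IsLeftBolAIP (B : Type*) [Add B] [Zero B] [Neg B] : Prop where
  zero_add : ∀ a : B, 0 + a = a
  add_zero : ∀ a : B, a + 0 = a
  left_bol : ∀ a b c : B, a + (b + (a + c)) = a + (b + a) + c
  neg_add : ∀ a b : B, -(a + b) = -a + -b
  neg_add_cancel : ∀ a : B, -a + a = 0
  neg_add_cancel_left : ∀ a x : B, -a + (a + x) = x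

namespace IsLeftBolAIP

variable {B : Type*} [Add B] [Zero B] [Neg B]

def reflect (x y : B) : B := y + (-x + y)

def subLeft (a c : B) : B := a + -c

variable [IsLeftBolAIP B]

protected theorem neg_neg (a : B) : -(-a) = a := by
  simpa only [IsLeftBolAIP.neg_add_cancel, IsLeftBolAIP.add_zero] using
    IsLeftBolAIP.neg_add_cancel_left (-a) a

protected theorem add_neg_cancel_left (a x : B) : a + (-a + x) = x := by
  simpa only [IsLeftBolAIP.neg_neg] using IsLeftBolAIP.neg_add_cancel_left (-a) x

protected theorem neg_zero : -(0 : B) = 0 := by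
  simpa only [IsLeftBolAIP.add_zero] using IsLeftBolAIP.neg_add_cancel (0 : B)

theorem reflect_self (x : B) : reflect x x = x := by
  rw [reflect, IsLeftBolAIP.neg_add_cancel, IsLeftBolAIP.add_zero]

theorem reflect_zero_left (u : B) : reflect 0 u = u + u := by
  rw [reflect, IsLeftBolAIP.neg_zero, IsLeftBolAIP.zero_add]

theorem reflect_reflect (x y : B) : reflect (reflect x y) y = x := by
  have hbol := left_bol (-y) x y
  rw [IsLeftBolAIP.neg_add_cancel, IsLeftBolAIP.add_zero] at hbol
  rw [reflect, reflect, IsLeftBolAIP.neg_add, IsLeftBolAIP.neg_add, IsLeftBolAIP.neg_neg, ← hbol,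
    IsLeftBolAIP.add_neg_cancel_left]

theorem subLeft_subLeft (a c : B) : subLeft a (subLeft a c) = c := by
  rw [subLeft, subLeft, IsLeftBolAIP.neg_add, IsLeftBolAIP.neg_neg,
    IsLeftBolAIP.add_neg_cancel_left]

theorem subLeft_subLeft_subLeft (a b c : B) :
    subLeft a (subLeft b (subLeft a c)) = subLeft (reflect b a) c := by
  rw [subLeft, subLeft, subLeft, IsLeftBolAIP.neg_add b, IsLeftBolAIP.neg_neg, left_bol, reflect,
    subLeft]

theorem subLeft_injective : Function.Injective (subLeft : B → B → B) := fun p q h => by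
  simpa only [subLeft, IsLeftBolAIP.neg_zero, IsLeftBolAIP.add_zero] using congrFun h 0

theorem reflect_reflect_reflect (x y z : B) :
    reflect (reflect x z) (reflect y z) = reflect (reflect x y) z := by
  apply subLeft_injective
  funext c
  simp only [← subLeft_subLeft_subLeft, subLeft_subLeft]

theorem reflect_bijective (hdouble : Function.Bijective fun x : B => x + x) (a : B) :
    Function.Bijective (reflect a) := by
  obtain ⟨u, rfl⟩ := hdouble.surjective a
  have hσ : Function.Involutive (reflect · u) := fun x => reflect_reflect x u
  suffices h : reflect (u + u) = (reflect · u) ∘ (fun x => x + x) ∘ (reflect · u) by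
    rw [h]
    exact hσ.bijective.comp (hdouble.comp hσ.bijective)
  funext z
  calc reflect (u + u) z
      = reflect (reflect (reflect (reflect 0 u) z) u) u := by
        rw [reflect_reflect, reflect_zero_left]
    _ = reflect (reflect (reflect (reflect 0 u) u) (reflect z u)) u := by
        rw [reflect_reflect_reflect]
    _ = reflect (reflect z u + reflect z u) u := by rw [reflect_reflect, reflect_zero_left]

end IsLeftBolAIP

theorem kloop_two_divisible_is_symetron_general {B : Type*}
    (add : B → B → B) (zero : B) (neg : B → B)
    (h0l : ∀ a, add zero a = a)
    (h0r : ∀ a, add a zero = a)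
    (hbol : ∀ a b c, add a (add b (add a c)) = add (add a (add b a)) c)
    (haut : ∀ a b, neg (add a b) = add (neg a) (neg b))
    (hnl : ∀ a, add (neg a) a = zero)
    (hlinv : ∀ a x, add (neg a) (add a x) = x)
    (hdiv : Function.Bijective (fun x : B => add x x))
    (s : B → B → B)
    (hs : ∀ x y, s x y = add y (add (neg x) y)) :
    (∀ a b : B, ∃! z : B, s a z = b) ∧
    (∀ x, s x x = x) ∧
    (∀ x y, s (s x y) y = x) ∧
    (∀ x y z, s (s x z) (s y z) = s (s x y) z) := by
  let _ : Add B := ⟨add⟩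
  let _ : Zero B := ⟨zero⟩
  let _ : Neg B := ⟨neg⟩
  have : IsLeftBolAIP B := ⟨h0l, h0r, hbol, haut, hnl, hlinv⟩
  obtain rfl : s = IsLeftBolAIP.reflect := funext fun x => funext (hs x)
  exact ⟨fun a => (Function.bijective_iff_existsUnique _).mp
      (IsLeftBolAIP.reflect_bijective hdiv a),
    IsLeftBolAIP.reflect_self, IsLeftBolAIP.reflect_reflect, IsLeftBolAIP.reflect_reflect_reflect⟩

/-- In a uniquely 2-divisible K-loop `(B,+,0,−)`, the operation
`s(x,y) = y + (−x + y)` admits unique midpoints, so `(B,s)` is a symétron. -/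
theorem kloop_two_divisible_is_symetron {B : Type*}
    (add : B → B → B) (zero : B) (neg : B → B)
    (h0l : ∀ a, add zero a = a)
    (h0r : ∀ a, add a zero = a)
    (huniql : ∀ a b, ∃! x, add x a = b)
    (huniqr : ∀ a b, ∃! y, add a y = b)
    (hbol : ∀ a b c, add a (add b (add a c)) = add (add a (add b a)) c)
    (haut : ∀ a b, neg (add a b) = add (neg a) (neg b))
    (hnl : ∀ a, add (neg a) a = zero)
    (hnr : ∀ a, add a (neg a) = zero)
    (hlinv : ∀ a x, add (neg a) (add a x) = x)
    (hdiv : Function.Bijective (fun x : B => add x x))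
    (s : B → B → B)
    (hs : ∀ x y, s x y = add y (add (neg x) y)) :
    (∀ a b : B, ∃! z : B, s a z = b) ∧
    (∀ x, s x x = x) ∧
    (∀ x y, s (s x y) y = x) ∧
    (∀ x y z, s (s x z) (s y z) = s (s x y) z) :=
  kloop_two_divisible_is_symetron_general add zero neg h0l h0r hbol haut hnl hlinv hdiv s hs
end

section
/- Let B be a fixed-point-free K-loop. Then for all a, b ∈ B: a + b = b + a if and only if δ_{a,b} = Id. -/
/-!
Since `a + b = δ_{a,b}(b + a)`, the elements `a` and `b` commute exactly when `δ_{a,b}` fixes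
`a + b`. Fixed-point-freeness then forces `δ_{a,b} = Id` unless `a + b = 0`, and in that case
`b = -a`, where `δ_{a,-a} = Id` holds anyway.
-/

section PrecessionMaps

variable {B : Type*} (add : B → B → B)

theorem eq_neg_of_add_eq_zero {zero : B} {neg : B → B}
    (h0r : ∀ a, add a zero = a) (hlinv : ∀ a x, add (neg a) (add a x) = x)
    {a b : B} (h : add a b = zero) : b = neg a :=
  calc b = add (neg a) (add a b) := (hlinv a b).symm
    _ = neg a := by rw [h, h0r]

variable {δ : B → B → Equiv.Perm B}

theorem precession_apply_add_of_comm (hdcomm : ∀ a b, add a b = δ a b (add b a)) {a b : B}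
    (h : add a b = add b a) : δ a b (add a b) = add a b :=
  calc δ a b (add a b) = δ a b (add b a) := by rw [h]
    _ = add a b := (hdcomm a b).symm

theorem add_comm_of_precession_eq_one (hdcomm : ∀ a b, add a b = δ a b (add b a)) {a b : B}
    (h : δ a b = 1) : add a b = add b a :=
  calc add a b = δ a b (add b a) := hdcomm a b
    _ = add b a := by rw [h, Equiv.Perm.one_apply]

end PrecessionMaps

theorem fpf_kloop_comm_iff_delta_eq_one_general {B : Type*}
    (add : B → B → B) (zero : B) (neg : B → B)
    (h0r : ∀ a, add a zero = a)
    (hlinv : ∀ a x, add (neg a) (add a x) = x)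
    -- the precession maps, characterized by a+(b+c) = (a+b)+δ_{a,b}(c)
    (δ : B → B → Equiv.Perm B)
    -- fixed-point-freeness: any element of D(B) fixing a nonzero point is the identity
    (hfpf : ∀ φ ∈ Subgroup.closure (Set.range fun p : B × B => δ p.1 p.2),
      (∃ c, c ≠ zero ∧ φ c = c) → φ = 1)
    -- standard K-loop facts about precession maps
    (hdneg : ∀ a, δ a (neg a) = 1)
    (hdcomm : ∀ a b, add a b = δ a b (add b a)) :
    ∀ a b : B, add a b = add b a ↔ δ a b = 1 := by
  intro a b
  refine ⟨fun hcomm => ?_, add_comm_of_precession_eq_one add hdcomm⟩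
  by_cases hzero : add a b = zero
  · rw [eq_neg_of_add_eq_zero add h0r hlinv hzero]
    exact hdneg a
  · exact hfpf _ (Subgroup.subset_closure ⟨(a, b), rfl⟩)
      ⟨add a b, hzero, precession_apply_add_of_comm add hdcomm hcomm⟩

/-- In a fixed-point-free K-loop, `a + b = b + a` iff the
precession map `δ_{a,b}` is the identity. -/
theorem fpf_kloop_comm_iff_delta_eq_one {B : Type*}
    (add : B → B → B) (zero : B) (neg : B → B)
    (h0l : ∀ a, add zero a = a)
    (h0r : ∀ a, add a zero = a)
    (huniql : ∀ a b, ∃! x, add x a = b)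
    (huniqr : ∀ a b, ∃! y, add a y = b)
    (hbol : ∀ a b c, add a (add b (add a c)) = add (add a (add b a)) c)
    (haut : ∀ a b, neg (add a b) = add (neg a) (neg b))
    (hnl : ∀ a, add (neg a) a = zero)
    (hnr : ∀ a, add a (neg a) = zero)
    (hlinv : ∀ a x, add (neg a) (add a x) = x)
    -- the precession maps, characterized by a+(b+c) = (a+b)+δ_{a,b}(c)
    (δ : B → B → Equiv.Perm B)
    (hdelta : ∀ a b c, add a (add b c) = add (add a b) (δ a b c))
    -- fixed-point-freeness: any element of D(B) fixing a nonzero point is the identity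
    (hfpf : ∀ φ ∈ Subgroup.closure (Set.range fun p : B × B => δ p.1 p.2),
      (∃ c, c ≠ zero ∧ φ c = c) → φ = 1)
    -- standard K-loop facts about precession maps
    (hdinv : ∀ a b, (δ a b)⁻¹ = δ b a)
    (hdneg : ∀ a, δ a (neg a) = 1)
    (hdcomm : ∀ a b, add a b = δ a b (add b a)) :
    ∀ a b : B, add a b = add b a ↔ δ a b = 1 :=
  fpf_kloop_comm_iff_delta_eq_one_general add zero neg h0r hlinv δ hfpf hdneg hdcomm
end

section
/- Let B be a fixed-point-free K-loop and x ∈ B. If b ∈ C_B(x), then b·n ∈ C_B(x) for every integer n; in particular b·n + x = x + (b·n) and b·n + (−x) = (−x) + (b·n) for all n ∈ ℤ. -/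
/-
Write `g_a := (a + ·)` for the left translations. The hypothesis `δ_{u,v} = 1` says
`g_u ∘ g_v = g_{u+v}`; inverting gives `g_{-v} ∘ g_{-u} = g_{-(u+v)}`, while the automorphic
inverse property gives `g_{-u} ∘ g_{-v} = g_{-(u+v)}`, so `g_{-u}` and `g_{-v}` commute, hence
so do `g_u` and `g_v`. Thus `b ∈ C_B(x)` makes `g_b` commute with `g_x` and `g_{-x}`, and by the
Bol identity `g_{b·n} = g_b^n`, so the same holds for `g_{b·n}`. Finally, when `g_p` commutes
with `g_{-x}`, the element `c = -(x + p)` is a fixed point of `δ_{x,p}`, which is therefore the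
identity by fixed-point-freeness (if `c = 0` then `p = -x` and `δ_{x,-x} = 1` directly).
-/

/-- Natural-number iterate `a·n` in a loop: `a·0 = 0`, `a·(n+1) = a + a·n`. -/
def nIter {B : Type*} (add : B → B → B) (zero : B) (a : B) : ℕ → B
  | 0 => zero
  | n + 1 => add a (nIter add zero a n)

/-- Integer iterate `a·n`: for `n ≥ 0` it is the `n`-th iterate of `a`,
for `n < 0` the `(−n)`-th iterate of `−a`. -/
def zIter {B : Type*} (add : B → B → B) (zero : B) (neg : B → B) (a : B) (n : ℤ) : B :=
  if 0 ≤ n then nIter add zero a n.toNat else nIter add zero (neg a) (-n).toNat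

section LeftInverseProperty

variable {B : Type*} {add : B → B → B} {zero : B} {neg : B → B}

theorem add_left_cancel_of_linv (hlinv : ∀ a x, add (neg a) (add a x) = x) {a u v : B}
    (h : add a u = add a v) : u = v := by
  rw [← hlinv a u, h, hlinv]

theorem neg_neg_of_linv (h0r : ∀ a, add a zero = a) (hlinv : ∀ a x, add (neg a) (add a x) = x)
    (a : B) : neg (neg a) = a := by
  have h := hlinv (neg a) (add a zero)
  rwa [hlinv a zero, h0r, h0r] at h

theorem add_neg_add_of_linv (h0r : ∀ a, add a zero = a)
    (hlinv : ∀ a x, add (neg a) (add a x) = x) (a y : B) : add a (add (neg a) y) = y := by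
  simpa only [neg_neg_of_linv h0r hlinv] using hlinv (neg a) y

theorem add_neg_self_of_linv (h0r : ∀ a, add a zero = a)
    (hlinv : ∀ a x, add (neg a) (add a x) = x) (a : B) : add a (neg a) = zero := by
  simpa only [h0r] using add_neg_add_of_linv h0r hlinv a zero

theorem neg_zero_of_linv (h0r : ∀ a, add a zero = a) (hlinv : ∀ a x, add (neg a) (add a x) = x) :
    neg zero = zero := by
  simpa only [h0r] using hlinv zero zero

theorem commute_add_neg_left (h0r : ∀ a, add a zero = a)
    (hlinv : ∀ a x, add (neg a) (add a x) = x) {a b : B}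
    (h : Function.Commute (add a) (add b)) : Function.Commute (add (neg a)) (add b) :=
  Function.Semiconj.inverse_left h (hlinv a) (add_neg_add_of_linv h0r hlinv a)

theorem add_comm_of_commute (h0r : ∀ a, add a zero = a) {a b : B}
    (h : Function.Commute (add a) (add b)) : add a b = add b a := by
  simpa only [h0r] using h zero

end LeftInverseProperty

section Precession

variable {B : Type*} {add : B → B → B} {zero : B} {neg : B → B} {δ : B → B → Equiv.Perm B}

theorem delta_apply_eq_self_iff (hlinv : ∀ a x, add (neg a) (add a x) = x)
    (hdelta : ∀ a b c, add a (add b c) = add (add a b) (δ a b c)) {u v c : B} :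
    δ u v c = c ↔ add u (add v c) = add (add u v) c := by
  rw [hdelta]
  exact ⟨fun h ↦ by rw [h], add_left_cancel_of_linv hlinv⟩

theorem delta_eq_one_iff (hlinv : ∀ a x, add (neg a) (add a x) = x)
    (hdelta : ∀ a b c, add a (add b c) = add (add a b) (δ a b c)) {u v : B} :
    δ u v = 1 ↔ ∀ c, add u (add v c) = add (add u v) c := by
  simp only [Equiv.ext_iff, Equiv.Perm.one_apply, delta_apply_eq_self_iff hlinv hdelta]

theorem commute_add_of_delta_eq_one (h0r : ∀ a, add a zero = a)
    (hlinv : ∀ a x, add (neg a) (add a x) = x) (haut : ∀ a b, neg (add a b) = add (neg a) (neg b))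
    (hdelta : ∀ a b c, add a (add b c) = add (add a b) (δ a b c)) {u v : B} (h : δ u v = 1) :
    Function.Commute (add v) (add (neg u)) := by
  have hassoc := (delta_eq_one_iff hlinv hdelta).1 h
  have neg_neg := neg_neg_of_linv h0r hlinv
  have add_neg_add := add_neg_add_of_linv h0r hlinv
  have hnegs : ∀ c, add (neg u) (add (neg v) c) = add (neg (add u v)) c := by
    intro c
    conv_lhs => rw [← neg_neg c]
    rw [← haut, ← haut, hassoc, haut, neg_neg]
  have hinv : ∀ c, add (neg v) (add (neg u) c) = add (neg (add u v)) c := by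
    intro c
    apply add_left_cancel_of_linv hlinv (a := add u v)
    rw [← hassoc, add_neg_add, add_neg_add, add_neg_add]
  have hcomm : Function.Commute (add (neg v)) (add (neg u)) := fun c ↦ by rw [hinv, hnegs]
  simpa only [neg_neg] using commute_add_neg_left h0r hlinv hcomm

theorem delta_eq_one_of_commute (h0l : ∀ a, add zero a = a) (h0r : ∀ a, add a zero = a)
    (hlinv : ∀ a x, add (neg a) (add a x) = x) (haut : ∀ a b, neg (add a b) = add (neg a) (neg b))
    (hdelta : ∀ a b c, add a (add b c) = add (add a b) (δ a b c))
    (hfpf : ∀ φ ∈ Subgroup.closure (Set.range fun p : B × B => δ p.1 p.2),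
      (∃ c, c ≠ zero ∧ φ c = c) → φ = 1)
    {x p : B} (h : Function.Commute (add p) (add (neg x))) : δ x p = 1 := by
  have add_neg_self := add_neg_self_of_linv h0r hlinv
  by_cases hxp : add x p = zero
  · obtain rfl : p = neg x := add_left_cancel_of_linv hlinv (hxp.trans (add_neg_self x).symm)
    rw [delta_eq_one_iff hlinv hdelta]
    intro c
    rw [add_neg_add_of_linv h0r hlinv, add_neg_self, h0l]
  · have hne : neg (add x p) ≠ zero := fun hc ↦ hxp <| by
      rw [← neg_neg_of_linv h0r hlinv (add x p), hc, neg_zero_of_linv h0r hlinv]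
    -- `c = -(x + p)` is fixed because `p + (-x + -p) = -x + (p + -p) = -x`.
    have hfix : δ x p (neg (add x p)) = neg (add x p) := by
      rw [delta_apply_eq_self_iff hlinv hdelta, add_neg_self, haut, h, add_neg_self, h0r,
        add_neg_self]
    exact hfpf _ (Subgroup.subset_closure ⟨(x, p), rfl⟩) ⟨_, hne, hfix⟩

end Precession

section Iterates

variable {B : Type*} {add : B → B → B} {zero : B} {neg : B → B}

theorem iterate_add_zero (v : B) (n : ℕ) : (add v)^[n] zero = nIter add zero v n := by
  induction n with
  | zero => rfl
  | succ n ih => rw [Function.iterate_succ_apply', ih, nIter]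

theorem add_nIter (h0l : ∀ a, add zero a = a) (h0r : ∀ a, add a zero = a)
    (hbol : ∀ a b c, add a (add b (add a c)) = add (add a (add b a)) c) (v : B) (n : ℕ) :
    add (nIter add zero v n) = (add v)^[n] := by
  induction n using Nat.twoStepInduction with
  | zero => exact funext h0l
  | one => exact funext fun c ↦ by simp only [nIter, h0r, Function.iterate_one]
  | more n ih _ =>
    have hsucc : add (nIter add zero v n) v = nIter add zero v (n + 1) := by
      rw [ih, ← iterate_add_zero, Function.iterate_succ_apply, h0r]
    funext c
    calc add (nIter add zero v (n + 2)) c = add (add v (add (nIter add zero v n) v)) c := by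
          rw [hsucc]; rfl
      _ = add v (add (nIter add zero v n) (add v c)) := (hbol _ _ _).symm
      _ = (add v)^[n + 2] c := by
          rw [ih, ← Function.iterate_succ_apply (add v) n,
            ← Function.iterate_succ_apply' (add v) (n + 1)]

theorem commute_add_nIter (h0l : ∀ a, add zero a = a) (h0r : ∀ a, add a zero = a)
    (hbol : ∀ a b c, add a (add b (add a c)) = add (add a (add b a)) c) {v u : B}
    (h : Function.Commute (add v) (add u)) (n : ℕ) :
    Function.Commute (add (nIter add zero v n)) (add u) := by
  rw [add_nIter h0l h0r hbol]
  exact h.iterate_left n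

theorem commute_add_zIter (h0l : ∀ a, add zero a = a) (h0r : ∀ a, add a zero = a)
    (hbol : ∀ a b c, add a (add b (add a c)) = add (add a (add b a)) c)
    (hlinv : ∀ a x, add (neg a) (add a x) = x) {b u : B}
    (h : Function.Commute (add b) (add u)) (n : ℤ) :
    Function.Commute (add (zIter add zero neg b n)) (add u) := by
  unfold zIter
  split_ifs
  · exact commute_add_nIter h0l h0r hbol h _
  · exact commute_add_nIter h0l h0r hbol (commute_add_neg_left h0r hlinv h) _

end Iterates

theorem fpf_kloop_centralizer_closed_under_iterates_general {B : Type*}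
    (add : B → B → B) (zero : B) (neg : B → B)
    (h0l : ∀ a, add zero a = a)
    (h0r : ∀ a, add a zero = a)
    (hbol : ∀ a b c, add a (add b (add a c)) = add (add a (add b a)) c)
    (haut : ∀ a b, neg (add a b) = add (neg a) (neg b))
    (hlinv : ∀ a x, add (neg a) (add a x) = x)
    (δ : B → B → Equiv.Perm B)
    (hdelta : ∀ a b c, add a (add b c) = add (add a b) (δ a b c))
    (hfpf : ∀ φ ∈ Subgroup.closure (Set.range fun p : B × B => δ p.1 p.2),
      (∃ c, c ≠ zero ∧ φ c = c) → φ = 1)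
    (x : B) (b : B)
    (hb : δ x b = 1 ∧ δ (neg x) b = 1) :
    ∀ n : ℤ,
      (δ x (zIter add zero neg b n) = 1 ∧ δ (neg x) (zIter add zero neg b n) = 1) ∧
      add (zIter add zero neg b n) x = add x (zIter add zero neg b n) ∧
      add (zIter add zero neg b n) (neg x) = add (neg x) (zIter add zero neg b n) := by
  intro n
  have neg_neg := neg_neg_of_linv h0r hlinv
  have hbx : Function.Commute (add b) (add x) := by
    simpa only [neg_neg] using commute_add_of_delta_eq_one h0r hlinv haut hdelta hb.2
  have hbnx := commute_add_of_delta_eq_one h0r hlinv haut hdelta hb.1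
  have hpx := commute_add_zIter h0l h0r hbol hlinv hbx n
  have hpnx := commute_add_zIter h0l h0r hbol hlinv hbnx n
  have hpnnx : Function.Commute (add (zIter add zero neg b n)) (add (neg (neg x))) := by
    rwa [neg_neg]
  exact ⟨⟨delta_eq_one_of_commute h0l h0r hlinv haut hdelta hfpf hpnx,
      delta_eq_one_of_commute h0l h0r hlinv haut hdelta hfpf hpnnx⟩,
    add_comm_of_commute h0r hpx, add_comm_of_commute h0r hpnx⟩

/-- In a fixed-point-free K-loop, the centralizer
`C_B(x) = {b : δ_{x,b} = Id ∧ δ_{−x,b} = Id}` is closed under the maps `b ↦ b·n`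
for all integers `n`; in particular `b·n` commutes with `x` and with `−x`. -/
theorem fpf_kloop_centralizer_closed_under_iterates {B : Type*}
    (add : B → B → B) (zero : B) (neg : B → B)
    (h0l : ∀ a, add zero a = a)
    (h0r : ∀ a, add a zero = a)
    (huniql : ∀ a b, ∃! x, add x a = b)
    (huniqr : ∀ a b, ∃! y, add a y = b)
    (hbol : ∀ a b c, add a (add b (add a c)) = add (add a (add b a)) c)
    (haut : ∀ a b, neg (add a b) = add (neg a) (neg b))
    (hnl : ∀ a, add (neg a) a = zero)
    (hnr : ∀ a, add a (neg a) = zero)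
    (hlinv : ∀ a x, add (neg a) (add a x) = x)
    (δ : B → B → Equiv.Perm B)
    (hdelta : ∀ a b c, add a (add b c) = add (add a b) (δ a b c))
    (hfpf : ∀ φ ∈ Subgroup.closure (Set.range fun p : B × B => δ p.1 p.2),
      (∃ c, c ≠ zero ∧ φ c = c) → φ = 1)
    (x : B) (b : B)
    (hb : δ x b = 1 ∧ δ (neg x) b = 1) :
    ∀ n : ℤ,
      (δ x (zIter add zero neg b n) = 1 ∧ δ (neg x) (zIter add zero neg b n) = 1) ∧
      add (zIter add zero neg b n) x = add x (zIter add zero neg b n) ∧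
      add (zIter add zero neg b n) (neg x) = add (neg x) (zIter add zero neg b n) :=
  fpf_kloop_centralizer_closed_under_iterates_general add zero neg h0l h0r hbol haut hlinv δ hdelta
    hfpf x b hb
end

section
/- Let B be a fixed-point-free K-loop and x ∈ B. Then Z(C_B(x)) is closed under + and under negation −, contains x·n for every integer n, and the restriction of + to Z(C_B(x)) is commutative and associative; thus (Z(C_B(x)), +, 0) is an abelian group containing the cyclic group generated by x. -/
/-!
In a fixed-point-free K-loop, `δ_{a,b}` fixes `(−b)+(−a)` exactly when `a + b = b + a`
(by the automorphic inverse property), and that point is nonzero unless `b = −a`, where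
`δ_{a,−a} = Id` anyway. Hence `δ_{a,b} = Id` iff `a` and `b` commute, and commuting elements
associate. The centralizer `C_B(x)` is therefore the commutant of `{x, −x}` and `Z(C_B(x))` is
`C_B(x)` intersected with its own commutant, and closure under `+` comes from
`(a+b)+c = a+(c+b) = (c+a)+b = c+(a+b)` for pairwise commuting `a, b, c`.
-/

namespace KLoop

variable {B : Type*} {add : B → B → B} {zero : B} {neg : B → B} {δ : B → B → Equiv.Perm B}

variable (add) in
def commutant (S : Set B) : Set B := {b | ∀ s ∈ S, add b s = add s b}

theorem zero_mem_commutant (h0l : ∀ a, add zero a = a) (h0r : ∀ a, add a zero = a)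
    (S : Set B) : zero ∈ commutant add S :=
  fun s _ => by rw [h0l, h0r]

theorem neg_mem_commutant (hinv : Function.Involutive neg)
    (haut : ∀ a b, neg (add a b) = add (neg a) (neg b)) {S : Set B}
    (hS : ∀ s ∈ S, neg s ∈ S) {b : B} (hb : b ∈ commutant add S) :
    neg b ∈ commutant add S := by
  intro s hs
  rw [← hinv s, ← haut, ← haut, hb _ (hS s hs)]

theorem add_mem_commutant
    (hassoc : ∀ a b c, add a b = add b a → add a (add b c) = add (add a b) c)
    {S : Set B} {a b : B} (ha : a ∈ commutant add S) (hb : b ∈ commutant add S)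
    (hab : add a b = add b a) : add a b ∈ commutant add S := by
  intro c hc
  calc add (add a b) c = add a (add b c) := (hassoc a b c hab).symm
    _ = add a (add c b) := by rw [hb c hc]
    _ = add (add a c) b := hassoc a c b (ha c hc)
    _ = add (add c a) b := by rw [ha c hc]
    _ = add c (add a b) := (hassoc c a b (ha c hc).symm).symm

theorem add_mem_commutant_inter_commutant
    (hassoc : ∀ a b c, add a b = add b a → add a (add b c) = add (add a b) c)
    {S : Set B} {a b : B} (ha : a ∈ commutant add S ∩ commutant add (commutant add S))
    (hb : b ∈ commutant add S ∩ commutant add (commutant add S)) :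
    add a b ∈ commutant add S ∩ commutant add (commutant add S) :=
  ⟨add_mem_commutant hassoc ha.1 hb.1 (ha.2 b hb.1),
    add_mem_commutant hassoc ha.2 hb.2 (ha.2 b hb.1)⟩

theorem neg_mem_commutant_inter_commutant (hinv : Function.Involutive neg)
    (haut : ∀ a b, neg (add a b) = add (neg a) (neg b)) {S : Set B}
    (hS : ∀ s ∈ S, neg s ∈ S) {a : B}
    (ha : a ∈ commutant add S ∩ commutant add (commutant add S)) :
    neg a ∈ commutant add S ∩ commutant add (commutant add S) :=
  have hCneg : ∀ b ∈ commutant add S, neg b ∈ commutant add S :=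
    fun _ => neg_mem_commutant hinv haut hS
  ⟨hCneg a ha.1, neg_mem_commutant hinv haut hCneg ha.2⟩

theorem nIter_mem {T : Set B} (h0 : zero ∈ T) (hadd : ∀ a ∈ T, ∀ b ∈ T, add a b ∈ T)
    {a : B} (ha : a ∈ T) (n : ℕ) : nIter add zero a n ∈ T := by
  induction n with
  | zero => exact h0
  | succ n ih => exact hadd a ha _ ih

theorem zIter_mem {T : Set B} (h0 : zero ∈ T) (hadd : ∀ a ∈ T, ∀ b ∈ T, add a b ∈ T)
    (hneg : ∀ a ∈ T, neg a ∈ T) {a : B} (ha : a ∈ T) (n : ℤ) :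
    zIter add zero neg a n ∈ T := by
  unfold zIter
  split
  · exact nIter_mem h0 hadd ha _
  · exact nIter_mem h0 hadd (hneg a ha) _

theorem neg_involutive (huniqr : ∀ a b, ∃! y, add a y = b) (hnl : ∀ a, add (neg a) a = zero)
    (hnr : ∀ a, add a (neg a) = zero) : Function.Involutive neg :=
  fun a => (huniqr (neg a) zero).unique (hnr (neg a)) (hnl a)

theorem add_neg_cancel_left (hinv : Function.Involutive neg)
    (hlinv : ∀ a x, add (neg a) (add a x) = x) (a c : B) : add a (add (neg a) c) = c := by
  simpa only [hinv a] using hlinv (neg a) c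

theorem precession_apply_neg_add_neg (huniqr : ∀ a b, ∃! y, add a y = b)
    (hinv : Function.Involutive neg) (haut : ∀ a b, neg (add a b) = add (neg a) (neg b))
    (hnr : ∀ a, add a (neg a) = zero) (hlinv : ∀ a x, add (neg a) (add a x) = x)
    (hdelta : ∀ a b c, add a (add b c) = add (add a b) (δ a b c)) (a b : B) :
    δ a b (add (neg b) (neg a)) = add (neg a) (neg b) := by
  refine (huniqr (add a b) zero).unique ?_ ?_
  · rw [← hdelta, add_neg_cancel_left hinv hlinv, hnr]
  · rw [← haut, hnr]

theorem precession_neg_right (h0l : ∀ a, add zero a = a) (hinv : Function.Involutive neg)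
    (hnr : ∀ a, add a (neg a) = zero) (hlinv : ∀ a x, add (neg a) (add a x) = x)
    (hdelta : ∀ a b c, add a (add b c) = add (add a b) (δ a b c)) (a : B) :
    δ a (neg a) = 1 := by
  ext c
  rw [Equiv.Perm.coe_one, id_eq]
  simpa only [add_neg_cancel_left hinv hlinv, hnr, h0l] using (hdelta a (neg a) c).symm

theorem precession_eq_one_iff_add_comm (h0l : ∀ a, add zero a = a)
    (huniqr : ∀ a b, ∃! y, add a y = b) (hinv : Function.Involutive neg)
    (haut : ∀ a b, neg (add a b) = add (neg a) (neg b)) (hnr : ∀ a, add a (neg a) = zero)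
    (hlinv : ∀ a x, add (neg a) (add a x) = x)
    (hdelta : ∀ a b c, add a (add b c) = add (add a b) (δ a b c))
    (hfix : ∀ a b c, c ≠ zero → δ a b c = c → δ a b = 1) (a b : B) :
    δ a b = 1 ↔ add a b = add b a := by
  have hfixed := precession_apply_neg_add_neg huniqr hinv haut hnr hlinv hdelta a b
  constructor
  · intro h
    rw [h, Equiv.Perm.coe_one, id_eq, ← haut, ← haut] at hfixed
    exact hinv.injective hfixed.symm
  · intro hab
    by_cases hz : add (neg b) (neg a) = zero
    · have hb : b = neg a := by
        rw [(huniqr (neg b) zero).unique hz (hnr (neg b)), hinv]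
      rw [hb]
      exact precession_neg_right h0l hinv hnr hlinv hdelta a
    · exact hfix a b _ hz (by rw [hfixed, ← haut, hab, haut])

end KLoop

open KLoop in
theorem fpf_kloop_center_of_centralizer_abelian_group_general {B : Type*}
    (add : B → B → B) (zero : B) (neg : B → B)
    (h0l : ∀ a, add zero a = a)
    (h0r : ∀ a, add a zero = a)
    (huniqr : ∀ a b, ∃! y, add a y = b)
    (haut : ∀ a b, neg (add a b) = add (neg a) (neg b))
    (hnl : ∀ a, add (neg a) a = zero)
    (hnr : ∀ a, add a (neg a) = zero)
    (hlinv : ∀ a x, add (neg a) (add a x) = x)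
    (δ : B → B → Equiv.Perm B)
    (hdelta : ∀ a b c, add a (add b c) = add (add a b) (δ a b c))
    (hfpf : ∀ φ ∈ Subgroup.closure (Set.range fun p : B × B => δ p.1 p.2),
      (∃ c, c ≠ zero ∧ φ c = c) → φ = 1)
    (x : B)
    -- the centralizer C_B(x) and the center Z(C_B(x)) of the centralizer
    (C Z : Set B)
    (hC : C = {b : B | δ x b = 1 ∧ δ (neg x) b = 1})
    (hZ : Z = {b ∈ C | ∀ b' ∈ C, δ b b' = 1}) :
    (∀ a ∈ Z, ∀ b ∈ Z, add a b ∈ Z) ∧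
    (∀ a ∈ Z, neg a ∈ Z) ∧
    (zero ∈ Z) ∧
    (∀ n : ℤ, zIter add zero neg x n ∈ Z) ∧
    (∀ a ∈ Z, ∀ b ∈ Z, add a b = add b a) ∧
    (∀ a ∈ Z, ∀ b ∈ Z, ∀ c ∈ Z, add a (add b c) = add (add a b) c) := by
  have hinv := neg_involutive huniqr hnl hnr
  have hδ := precession_eq_one_iff_add_comm h0l huniqr hinv haut hnr hlinv hdelta
    fun a b c hc hfix => hfpf _ (Subgroup.subset_closure ⟨(a, b), rfl⟩) ⟨c, hc, hfix⟩
  have hassoc a b c (hab : add a b = add b a) : add a (add b c) = add (add a b) c := by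
    rw [hdelta, (hδ a b).2 hab, Equiv.Perm.coe_one, id_eq]
  have hZ' : Z = commutant add {x, neg x} ∩ commutant add (commutant add {x, neg x}) := by
    have hC' : C = commutant add {x, neg x} := by
      ext b
      simp only [hC, commutant, Set.mem_ofPred_eq, Set.mem_insert_iff, Set.mem_singleton_iff,
        forall_eq_or_imp, forall_eq, hδ]
      exact and_congr eq_comm eq_comm
    rw [← hC', hZ]
    exact Set.ext fun b => and_congr_right' (forall₂_congr fun b' _ => hδ b b')
  have hZadd : ∀ a ∈ Z, ∀ b ∈ Z, add a b ∈ Z := by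
    rw [hZ']
    exact fun a ha b hb => add_mem_commutant_inter_commutant hassoc ha hb
  have hZneg : ∀ a ∈ Z, neg a ∈ Z := by
    rw [hZ']
    exact fun a => neg_mem_commutant_inter_commutant hinv haut (by simp [hinv x])
  have hZzero : zero ∈ Z :=
    hZ' ▸ ⟨zero_mem_commutant h0l h0r _, zero_mem_commutant h0l h0r _⟩
  have hxZ : x ∈ Z := by
    rw [hZ']
    refine ⟨?_, fun b hb => (hb x (by simp)).symm⟩
    simp [commutant, hnl, hnr]
  refine ⟨hZadd, hZneg, hZzero, zIter_mem hZzero hZadd hZneg hxZ, ?_, ?_⟩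
  · exact fun a ha b hb => (hZ' ▸ ha).2 b (hZ' ▸ hb).1
  · exact fun a ha b hb c _ => hassoc a b c ((hZ' ▸ ha).2 b (hZ' ▸ hb).1)

/-- In a fixed-point-free K-loop, the center `Z(C_B(x))` of the
centralizer of `x` is closed under `+` and `−`, contains `x·n` for every
integer `n`, and `+` restricted to it is commutative and associative; thus it
is an abelian group containing the cyclic group generated by `x`. -/
theorem fpf_kloop_center_of_centralizer_abelian_group {B : Type*}
    (add : B → B → B) (zero : B) (neg : B → B)
    (h0l : ∀ a, add zero a = a)
    (h0r : ∀ a, add a zero = a)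
    (huniql : ∀ a b, ∃! x, add x a = b)
    (huniqr : ∀ a b, ∃! y, add a y = b)
    (hbol : ∀ a b c, add a (add b (add a c)) = add (add a (add b a)) c)
    (haut : ∀ a b, neg (add a b) = add (neg a) (neg b))
    (hnl : ∀ a, add (neg a) a = zero)
    (hnr : ∀ a, add a (neg a) = zero)
    (hlinv : ∀ a x, add (neg a) (add a x) = x)
    (δ : B → B → Equiv.Perm B)
    (hdelta : ∀ a b c, add a (add b c) = add (add a b) (δ a b c))
    (hfpf : ∀ φ ∈ Subgroup.closure (Set.range fun p : B × B => δ p.1 p.2),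
      (∃ c, c ≠ zero ∧ φ c = c) → φ = 1)
    (x : B)
    -- the centralizer C_B(x) and the center Z(C_B(x)) of the centralizer
    (C Z : Set B)
    (hC : C = {b : B | δ x b = 1 ∧ δ (neg x) b = 1})
    (hZ : Z = {b ∈ C | ∀ b' ∈ C, δ b b' = 1}) :
    (∀ a ∈ Z, ∀ b ∈ Z, add a b ∈ Z) ∧
    (∀ a ∈ Z, neg a ∈ Z) ∧
    (zero ∈ Z) ∧
    (∀ n : ℤ, zIter add zero neg x n ∈ Z) ∧
    (∀ a ∈ Z, ∀ b ∈ Z, add a b = add b a) ∧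
    (∀ a ∈ Z, ∀ b ∈ Z, ∀ c ∈ Z, add a (add b c) = add (add a b) c) :=
  fpf_kloop_center_of_centralizer_abelian_group_general add zero neg h0l h0r huniqr haut hnl hnr
    hlinv δ hdelta hfpf x C Z hC hZ
end

section
/- A fixed-point-free K-loop B containing an element x of infinite order (i.e. x·n ≠ 0 for all integers n ≠ 0) contains an infinite abelian group: Z(C_B(x)) is infinite, closed under + and −, and + restricted to it is commutative and associative. -/
/-- The identities of a K-loop (without the unique solvability of equations). -/
structure KLoopLaws {B : Type*} (add : B → B → B) (zero : B) (neg : B → B) : Prop where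
  zero_add : ∀ a, add zero a = a
  add_zero : ∀ a, add a zero = a
  bol : ∀ a b c, add a (add b (add a c)) = add (add a (add b a)) c
  neg_add : ∀ a b, neg (add a b) = add (neg a) (neg b)
  neg_add_cancel : ∀ a, add (neg a) a = zero
  add_neg_cancel : ∀ a, add a (neg a) = zero
  neg_add_cancel_left : ∀ a x, add (neg a) (add a x) = x

def commutant {B : Type*} (add : B → B → B) (S : Set B) : Set B :=
  {b | ∀ s ∈ S, add s b = add b s}

def IsPrecessionMap {B : Type*} (add : B → B → B) (δ : B → B → Equiv.Perm B) : Prop :=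
  ∀ a b c, add a (add b c) = add (add a b) (δ a b c)

def FixedPointFree {B : Type*} (zero : B) (δ : B → B → Equiv.Perm B) : Prop :=
  ∀ a b c, c ≠ zero → δ a b c = c → δ a b = 1

theorem commutant_anti {B : Type*} {add : B → B → B} {S T : Set B} (h : S ⊆ T) :
    commutant add T ⊆ commutant add S :=
  fun _ hb s hs => hb s (h hs)

namespace KLoopLaws

variable {B : Type*} {add : B → B → B} {zero : B} {neg : B → B}

theorem add_left_cancel (hB : KLoopLaws add zero neg) {a b c : B} (h : add a b = add a c) :
    b = c := by
  rw [← hB.neg_add_cancel_left a b, h, hB.neg_add_cancel_left]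

theorem neg_neg (hB : KLoopLaws add zero neg) (a : B) : neg (neg a) = a :=
  hB.add_left_cancel (by rw [hB.add_neg_cancel, hB.neg_add_cancel])

theorem add_neg_cancel_left (hB : KLoopLaws add zero neg) (a x : B) :
    add a (add (neg a) x) = x := by
  simpa only [hB.neg_neg] using hB.neg_add_cancel_left (neg a) x

theorem add_comm_neg (hB : KLoopLaws add zero neg) {a b : B} (h : add a b = add b a) :
    add (neg a) (neg b) = add (neg b) (neg a) := by
  rw [← hB.neg_add, h, hB.neg_add]

theorem neg_mem_commutant (hB : KLoopLaws add zero neg) {S : Set B}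
    (hS : ∀ s ∈ S, neg s ∈ S) {b : B} (hb : b ∈ commutant add S) :
    neg b ∈ commutant add S := by
  intro s hs
  simpa only [hB.neg_neg] using hB.add_comm_neg (hb (neg s) (hS s hs))

theorem pair_neg_mem (hB : KLoopLaws add zero neg) (a : B) :
    ∀ s ∈ ({a, neg a} : Set B), neg s ∈ ({a, neg a} : Set B) := by
  simp [hB.neg_neg]

theorem pair_subset_commutant (hB : KLoopLaws add zero neg) (a : B) :
    {a, neg a} ⊆ commutant add {a, neg a} := by
  simp [Set.insert_subset_iff, commutant, hB.add_neg_cancel, hB.neg_add_cancel]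

def leftTrans (hB : KLoopLaws add zero neg) (a : B) : Equiv.Perm B where
  toFun := add a
  invFun := add (neg a)
  left_inv := hB.neg_add_cancel_left a
  right_inv := hB.add_neg_cancel_left a

@[simp]
theorem leftTrans_apply (hB : KLoopLaws add zero neg) (a c : B) : hB.leftTrans a c = add a c :=
  rfl

theorem leftTrans_zero (hB : KLoopLaws add zero neg) : hB.leftTrans zero = 1 := by
  ext c; simp [hB.zero_add]

theorem leftTrans_neg (hB : KLoopLaws add zero neg) (a : B) :
    hB.leftTrans (neg a) = (hB.leftTrans a)⁻¹ :=
  eq_inv_of_mul_eq_one_left (by ext c; simp [hB.neg_add_cancel_left])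

theorem leftTrans_bol (hB : KLoopLaws add zero neg) (a b : B) :
    hB.leftTrans a * hB.leftTrans b * hB.leftTrans a = hB.leftTrans (add a (add b a)) := by
  ext c; simp [hB.bol]

theorem add_comm_of_commute_leftTrans (hB : KLoopLaws add zero neg) {a b : B}
    (h : Commute (hB.leftTrans a) (hB.leftTrans b)) : add a b = add b a := by
  simpa [hB.add_zero] using congrArg (· zero) h.eq

theorem leftTrans_nIter (hB : KLoopLaws add zero neg) (a : B) (n : ℕ) :
    hB.leftTrans (nIter add zero a n) = hB.leftTrans a ^ n := by
  induction n using Nat.twoStepInduction with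
  | zero => exact hB.leftTrans_zero
  | one => ext c; simp [nIter, hB.add_zero]
  | more n ih ih' =>
    -- `a·n + a = g_a ^ (n + 1) 0 = a·(n + 1)`, so the Bol identity applies to `b = a·n`
    have hcomm : add (nIter add zero a n) a = add a (nIter add zero a n) := by
      have h := congrArg (· zero) ih'
      simp only [leftTrans_apply, pow_succ, Equiv.Perm.mul_apply, ← ih, hB.add_zero] at h
      exact h.symm
    calc hB.leftTrans (nIter add zero a (n + 2))
        = hB.leftTrans (add a (add (nIter add zero a n) a)) := by rw [hcomm]; rfl
      _ = hB.leftTrans a ^ (n + 2) := by rw [← hB.leftTrans_bol, ih]; group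

theorem leftTrans_zIter (hB : KLoopLaws add zero neg) (a : B) (n : ℤ) :
    hB.leftTrans (zIter add zero neg a n) = hB.leftTrans a ^ n := by
  unfold zIter
  split_ifs with h
  · rw [leftTrans_nIter, ← zpow_natCast, Int.toNat_of_nonneg h]
  · rw [leftTrans_nIter, leftTrans_neg, inv_pow, ← zpow_natCast,
      Int.toNat_of_nonneg (by omega), ← zpow_neg, _root_.neg_neg]

theorem zIter_add_zIter (hB : KLoopLaws add zero neg) (a : B) (m n : ℤ) :
    add (zIter add zero neg a m) (zIter add zero neg a n) = zIter add zero neg a (m + n) := by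
  have eq_pow_apply : ∀ k, zIter add zero neg a k = (hB.leftTrans a ^ k) zero := fun k => by
    simpa [hB.add_zero] using congrArg (· zero) (hB.leftTrans_zIter a k)
  rw [← leftTrans_apply hB, leftTrans_zIter, eq_pow_apply n, eq_pow_apply (m + n), zpow_add, Equiv.Perm.mul_apply]

theorem zIter_injective (hB : KLoopLaws add zero neg) {a : B}
    (ha : ∀ n : ℤ, n ≠ 0 → zIter add zero neg a n ≠ zero) :
    Function.Injective (zIter add zero neg a) := by
  intro m n h
  by_contra hmn
  refine ha (-n + m) (by omega) ?_
  rw [← hB.zIter_add_zIter, h, hB.zIter_add_zIter, _root_.neg_add_cancel]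
  simp [zIter, nIter]

section Precession

variable {δ : B → B → Equiv.Perm B}

theorem precession_eq_one_iff (hB : KLoopLaws add zero neg) (hδ : IsPrecessionMap add δ)
    {a b : B} :
    δ a b = 1 ↔ ∀ c, add a (add b c) = add (add a b) c := by
  refine ⟨fun h c => by rw [hδ, h]; rfl, fun h => ?_⟩
  ext c
  exact (hB.add_left_cancel ((h c).symm.trans (hδ a b c))).symm

theorem precession_eq_one_iff_leftTrans (hB : KLoopLaws add zero neg)
    (hδ : IsPrecessionMap add δ) {a b : B} :
    δ a b = 1 ↔ hB.leftTrans a * hB.leftTrans b = hB.leftTrans (add a b) := by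
  simp [hB.precession_eq_one_iff hδ, Equiv.Perm.ext_iff]

theorem precession_neg_neg_apply (hB : KLoopLaws add zero neg)
    (hδ : IsPrecessionMap add δ) (a b c : B) :
    δ (neg a) (neg b) c = neg (δ a b (neg c)) := by
  have h := congrArg neg (hδ a b (neg c))
  simp only [hB.neg_add, hB.neg_neg] at h
  exact hB.add_left_cancel ((hδ (neg a) (neg b) c).symm.trans h)

theorem precession_neg_neg_eq_one (hB : KLoopLaws add zero neg)
    (hδ : IsPrecessionMap add δ) {a b : B} (h : δ a b = 1) :
    δ (neg a) (neg b) = 1 := by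
  ext c
  simp [hB.precession_neg_neg_apply hδ, h, hB.neg_neg]

theorem precession_neg_neg_apply_add (hB : KLoopLaws add zero neg)
    (hδ : IsPrecessionMap add δ) (a b : B) :
    δ (neg a) (neg b) (add b a) = add a b := by
  have h := hδ (neg a) (neg b) (add b a)
  rw [hB.neg_add_cancel_left b a, hB.neg_add_cancel a, ← hB.neg_add] at h
  exact hB.add_left_cancel (h.symm.trans (hB.neg_add_cancel _).symm)

theorem commute_leftTrans_of_precession_eq_one (hB : KLoopLaws add zero neg)
    (hδ : IsPrecessionMap add δ) {a b : B} (h : δ a b = 1) :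
    Commute (hB.leftTrans a) (hB.leftTrans b) := by
  have hab := (hB.precession_eq_one_iff_leftTrans hδ).1 h
  have hba := (hB.precession_eq_one_iff_leftTrans hδ).1 (hB.precession_neg_neg_eq_one hδ h)
  rw [← hB.neg_add, leftTrans_neg, leftTrans_neg, leftTrans_neg, ← mul_inv_rev, inv_inj] at hba
  exact hab.trans hba.symm

theorem add_comm_of_precession_eq_one (hB : KLoopLaws add zero neg)
    (hδ : IsPrecessionMap add δ) {a b : B} (h : δ a b = 1) :
    add a b = add b a :=
  hB.add_comm_of_commute_leftTrans (hB.commute_leftTrans_of_precession_eq_one hδ h)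

theorem precession_eq_one_of_add_comm (hB : KLoopLaws add zero neg)
    (hδ : IsPrecessionMap add δ) (hfix : FixedPointFree zero δ) {a b : B}
    (h : add a b = add b a) : δ a b = 1 := by
  by_cases h0 : add a b = zero
  · obtain rfl : b = neg a := hB.add_left_cancel (h0.trans (hB.add_neg_cancel a).symm)
    rw [hB.precession_eq_one_iff_leftTrans hδ, leftTrans_neg, mul_inv_cancel, hB.add_neg_cancel,
      leftTrans_zero]
  · have hfixed : δ (neg a) (neg b) (add b a) = add b a := by
      rw [precession_neg_neg_apply_add hB hδ, h]
    have h1 := hfix _ _ _ (h ▸ h0) hfixed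
    simpa only [hB.neg_neg] using hB.precession_neg_neg_eq_one hδ h1

theorem precession_eq_one_iff_add_comm (hB : KLoopLaws add zero neg)
    (hδ : IsPrecessionMap add δ) (hfix : FixedPointFree zero δ) (a b : B) :
    δ a b = 1 ↔ add a b = add b a :=
  ⟨hB.add_comm_of_precession_eq_one hδ, hB.precession_eq_one_of_add_comm hδ hfix⟩

theorem add_assoc_of_add_comm (hB : KLoopLaws add zero neg)
    (hδ : IsPrecessionMap add δ) (hfix : FixedPointFree zero δ) {a b : B}
    (h : add a b = add b a) (c : B) : add a (add b c) = add (add a b) c :=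
  (hB.precession_eq_one_iff hδ).1 (hB.precession_eq_one_of_add_comm hδ hfix h) c

theorem add_comm_add (hB : KLoopLaws add zero neg)
    (hδ : IsPrecessionMap add δ) (hfix : FixedPointFree zero δ) {a b c : B}
    (hab : add a b = add b a) (hac : add a c = add c a) (hbc : add b c = add c b) :
    add (add a b) c = add c (add a b) := by
  calc add (add a b) c = add a (add b c) := (hB.add_assoc_of_add_comm hδ hfix hab c).symm
    _ = add (add a c) b := by rw [hbc, hB.add_assoc_of_add_comm hδ hfix hac]
    _ = add c (add a b) := by rw [hac, hB.add_assoc_of_add_comm hδ hfix hac.symm]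

theorem zIter_add_comm (hB : KLoopLaws add zero neg)
    (hδ : IsPrecessionMap add δ) (hfix : FixedPointFree zero δ) {a c : B}
    (h : add a c = add c a) (n : ℤ) :
    add (zIter add zero neg a n) c = add c (zIter add zero neg a n) := by
  apply hB.add_comm_of_commute_leftTrans
  rw [leftTrans_zIter]
  exact (hB.commute_leftTrans_of_precession_eq_one hδ
    (hB.precession_eq_one_of_add_comm hδ hfix h)).zpow_left n

theorem add_mem_commutant_commutant (hB : KLoopLaws add zero neg)
    (hδ : IsPrecessionMap add δ) (hfix : FixedPointFree zero δ) {S : Set B}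
    (hS : S ⊆ commutant add S) {a b : B} (ha : a ∈ commutant add (commutant add S))
    (hb : b ∈ commutant add (commutant add S)) :
    add a b ∈ commutant add (commutant add S) := fun c hc =>
  (hB.add_comm_add hδ hfix (ha b (commutant_anti hS hb)).symm (ha c hc).symm
    (hb c hc).symm).symm

theorem zIter_mem_commutant_commutant (hB : KLoopLaws add zero neg)
    (hδ : IsPrecessionMap add δ) (hfix : FixedPointFree zero δ) (a : B) (n : ℤ) :
    zIter add zero neg a n ∈ commutant add (commutant add {a, neg a}) := fun _ hc =>
  (hB.zIter_add_comm hδ hfix (hc a (Set.mem_insert a _)) n).symm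

end Precession

end KLoopLaws

theorem fpf_kloop_infinite_order_gives_infinite_abelian_group_general {B : Type*}
    (add : B → B → B) (zero : B) (neg : B → B)
    (h0l : ∀ a, add zero a = a)
    (h0r : ∀ a, add a zero = a)
    (hbol : ∀ a b c, add a (add b (add a c)) = add (add a (add b a)) c)
    (haut : ∀ a b, neg (add a b) = add (neg a) (neg b))
    (hnl : ∀ a, add (neg a) a = zero)
    (hnr : ∀ a, add a (neg a) = zero)
    (hlinv : ∀ a x, add (neg a) (add a x) = x)
    (δ : B → B → Equiv.Perm B)
    (hdelta : ∀ a b c, add a (add b c) = add (add a b) (δ a b c))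
    (hfpf : ∀ φ ∈ Subgroup.closure (Set.range fun p : B × B => δ p.1 p.2),
      (∃ c, c ≠ zero ∧ φ c = c) → φ = 1)
    (x : B)
    -- x has infinite order
    (hx : ∀ n : ℤ, n ≠ 0 → zIter add zero neg x n ≠ zero)
    (C Z : Set B)
    (hC : C = {b : B | δ x b = 1 ∧ δ (neg x) b = 1})
    (hZ : Z = {b ∈ C | ∀ b' ∈ C, δ b b' = 1}) :
    Z.Infinite ∧
    (∀ a ∈ Z, ∀ b ∈ Z, add a b ∈ Z) ∧
    (∀ a ∈ Z, neg a ∈ Z) ∧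
    (∀ a ∈ Z, ∀ b ∈ Z, add a b = add b a) ∧
    (∀ a ∈ Z, ∀ b ∈ Z, ∀ c ∈ Z, add a (add b c) = add (add a b) c) := by
  have hB : KLoopLaws add zero neg := ⟨h0l, h0r, hbol, haut, hnl, hnr, hlinv⟩
  have hfix : FixedPointFree zero δ := fun a b c hc hfixed =>
    hfpf _ (Subgroup.subset_closure ⟨(a, b), rfl⟩) ⟨c, hc, hfixed⟩
  have hcomm := hB.precession_eq_one_iff_add_comm hdelta hfix
  have hS := hB.pair_subset_commutant x
  obtain rfl : C = commutant add {x, neg x} := by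
    ext b
    simp [hC, hcomm, commutant]
  obtain rfl : Z = commutant add (commutant add {x, neg x}) := by
    ext b
    rw [hZ]
    exact ⟨fun hb s hs => ((hcomm b s).1 (hb.2 s hs)).symm,
      fun hb => ⟨commutant_anti hS hb, fun s hs => (hcomm b s).2 (hb s hs).symm⟩⟩
  refine ⟨Set.infinite_of_injective_forall_mem (hB.zIter_injective hx)
      (hB.zIter_mem_commutant_commutant hdelta hfix x),
    fun a ha b hb => hB.add_mem_commutant_commutant hdelta hfix hS ha hb,
    fun a ha => hB.neg_mem_commutant (fun _ hc => hB.neg_mem_commutant (hB.pair_neg_mem x) hc) ha,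
    fun a ha b hb => (ha b (commutant_anti hS hb)).symm,
    fun a ha b hb c _ =>
      hB.add_assoc_of_add_comm hdelta hfix (ha b (commutant_anti hS hb)).symm c⟩

/-- A fixed-point-free K-loop containing an element `x` of infinite
order contains an infinite abelian group, namely `Z(C_B(x))`: it is infinite,
closed under `+` and `−`, and `+` restricted to it is commutative and associative. -/
theorem fpf_kloop_infinite_order_gives_infinite_abelian_group {B : Type*}
    (add : B → B → B) (zero : B) (neg : B → B)
    (h0l : ∀ a, add zero a = a)
    (h0r : ∀ a, add a zero = a)
    (huniql : ∀ a b, ∃! x, add x a = b)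
    (huniqr : ∀ a b, ∃! y, add a y = b)
    (hbol : ∀ a b c, add a (add b (add a c)) = add (add a (add b a)) c)
    (haut : ∀ a b, neg (add a b) = add (neg a) (neg b))
    (hnl : ∀ a, add (neg a) a = zero)
    (hnr : ∀ a, add a (neg a) = zero)
    (hlinv : ∀ a x, add (neg a) (add a x) = x)
    (δ : B → B → Equiv.Perm B)
    (hdelta : ∀ a b c, add a (add b c) = add (add a b) (δ a b c))
    (hfpf : ∀ φ ∈ Subgroup.closure (Set.range fun p : B × B => δ p.1 p.2),
      (∃ c, c ≠ zero ∧ φ c = c) → φ = 1)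
    (x : B)
    -- x has infinite order
    (hx : ∀ n : ℤ, n ≠ 0 → zIter add zero neg x n ≠ zero)
    (C Z : Set B)
    (hC : C = {b : B | δ x b = 1 ∧ δ (neg x) b = 1})
    (hZ : Z = {b ∈ C | ∀ b' ∈ C, δ b b' = 1}) :
    Z.Infinite ∧
    (∀ a ∈ Z, ∀ b ∈ Z, add a b ∈ Z) ∧
    (∀ a ∈ Z, neg a ∈ Z) ∧
    (∀ a ∈ Z, ∀ b ∈ Z, add a b = add b a) ∧
    (∀ a ∈ Z, ∀ b ∈ Z, ∀ c ∈ Z, add a (add b c) = add (add a b) c) :=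
  fpf_kloop_infinite_order_gives_infinite_abelian_group_general add zero neg h0l h0r hbol haut hnl
    hnr hlinv δ hdelta hfpf x hx C Z hC hZ
end

section
/- Let B be a fixed-point-free K-loop and let a, b, x, y ∈ B with b + a ≠ 0. If δ_{x,y}(b+a) = a+b, then δ_{x,y} = δ_{a,b}. In particular, in a fixed-point-free K-loop the precession map δ_{a,b} is determined by the pair of elements (a+b, b+a). -/
theorem Equiv.Perm.eq_of_apply_eq_of_fixedPointFree {α : Type*} {H : Subgroup (Equiv.Perm α)}
    {z : α} (hH : ∀ φ ∈ H, (∃ c, c ≠ z ∧ φ c = c) → φ = 1)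
    {σ τ : Equiv.Perm α} (hσ : σ ∈ H) (hτ : τ ∈ H) {c : α} (hc : c ≠ z) (h : σ c = τ c) :
    σ = τ := by
  have hfix : (σ⁻¹ * τ) c = c := by
    rw [Equiv.Perm.mul_apply, ← h, Equiv.Perm.inv_eq_iff_eq]
  exact inv_mul_eq_one.mp (hH _ (mul_mem (inv_mem hσ) hτ) ⟨c, hc, hfix⟩)

theorem fpf_kloop_precession_determined_general {B : Type*}
    (add : B → B → B) (zero : B)
    (δ : B → B → Equiv.Perm B)
    (hfpf : ∀ φ ∈ Subgroup.closure (Set.range fun p : B × B => δ p.1 p.2),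
      (∃ c, c ≠ zero ∧ φ c = c) → φ = 1)
    -- standard K-loop facts about precession maps
    (hdcomm : ∀ a b, add a b = δ a b (add b a))
    (a b x y : B)
    (hba : add b a ≠ zero)
    (h : δ x y (add b a) = add a b) :
    δ x y = δ a b :=
  Equiv.Perm.eq_of_apply_eq_of_fixedPointFree hfpf
    (Subgroup.subset_closure ⟨(x, y), rfl⟩) (Subgroup.subset_closure ⟨(a, b), rfl⟩) hba
    (h.trans (hdcomm a b))

/-- In a fixed-point-free K-loop, if `b + a ≠ 0` and
`δ_{x,y}(b+a) = a+b`, then `δ_{x,y} = δ_{a,b}`; so the precession map `δ_{a,b}`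
is determined by the pair `(a+b, b+a)`. -/
theorem fpf_kloop_precession_determined {B : Type*}
    (add : B → B → B) (zero : B) (neg : B → B)
    (h0l : ∀ a, add zero a = a)
    (h0r : ∀ a, add a zero = a)
    (huniql : ∀ a b, ∃! x, add x a = b)
    (huniqr : ∀ a b, ∃! y, add a y = b)
    (hbol : ∀ a b c, add a (add b (add a c)) = add (add a (add b a)) c)
    (haut : ∀ a b, neg (add a b) = add (neg a) (neg b))
    (hnl : ∀ a, add (neg a) a = zero)
    (hnr : ∀ a, add a (neg a) = zero)
    (hlinv : ∀ a x, add (neg a) (add a x) = x)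
    (δ : B → B → Equiv.Perm B)
    (hdelta : ∀ a b c, add a (add b c) = add (add a b) (δ a b c))
    (hfpf : ∀ φ ∈ Subgroup.closure (Set.range fun p : B × B => δ p.1 p.2),
      (∃ c, c ≠ zero ∧ φ c = c) → φ = 1)
    -- standard K-loop facts about precession maps
    (hdinv : ∀ a b, (δ a b)⁻¹ = δ b a)
    (hdcomm : ∀ a b, add a b = δ a b (add b a))
    (a b x y : B)
    (hba : add b a ≠ zero)
    (h : δ x y (add b a) = add a b) :
    δ x y = δ a b :=
  fpf_kloop_precession_determined_general add zero δ hfpf hdcomm a b x y hba h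
end

section
/- Let (S,s) be a symétron and Y ⊆ S. Then the symétriseur Sym(Y) is a convex subset of S: if x, x' ∈ Sym(Y), then s(x',x) ∈ Sym(Y). -/
/- The symmetry about `s x' x` is the conjugate of the symmetry about `x'` by the symmetry about `x`,
so it maps `Y` onto `Y` whenever both of those do. -/

theorem symmetry_at_symmetry_eq_comp {S : Type*} (s : S → S → S)
    (hs2 : ∀ x y, s (s x y) y = x)
    (hs3 : ∀ x y z, s (s x z) (s y z) = s (s x y) z) (x x' : S) :
    (fun y => s y (s x' x)) = (fun y => s y x) ∘ (fun y => s y x') ∘ (fun y => s y x) := by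
  funext y
  simpa only [hs2, Function.comp_apply] using hs3 (s y x) x' x

theorem symetron_symetriseur_convex_general {S : Type*}
    (s : S → S → S)
    (hs2 : ∀ x y, s (s x y) y = x)
    (hs3 : ∀ x y z, s (s x z) (s y z) = s (s x y) z)
    (Y : Set S) :
    ∀ x ∈ {x : S | (fun y => s y x) '' Y = Y},
      ∀ x' ∈ {x : S | (fun y => s y x) '' Y = Y},
        s x' x ∈ {x : S | (fun y => s y x) '' Y = Y} := by
  intro x hx x' hx'
  change (fun y => s y (s x' x)) '' Y = Y
  rw [symmetry_at_symmetry_eq_comp s hs2 hs3, Set.image_comp, Set.image_comp, hx, hx', hx]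

/-- In a symétron `(S,s)`, the symétriseur
`Sym(Y) = {x : s(·,x) '' Y = Y}` of any subset `Y` is convex. -/
theorem symetron_symetriseur_convex {S : Type*}
    (s : S → S → S)
    (hs1 : ∀ x, s x x = x)
    (hs2 : ∀ x y, s (s x y) y = x)
    (hs3 : ∀ x y z, s (s x z) (s y z) = s (s x y) z)
    (hs4 : ∀ x y, ∃! z, s x z = y)
    (Y : Set S) :
    ∀ x ∈ {x : S | (fun y => s y x) '' Y = Y},
      ∀ x' ∈ {x : S | (fun y => s y x) '' Y = Y},
        s x' x ∈ {x : S | (fun y => s y x) '' Y = Y} :=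
  symetron_symetriseur_convex_general s hs2 hs3 Y
end

section
/- Let (S,s) be a symétron and Y ⊆ S nonempty, and fix y ∈ Y. Then the map x ↦ s(y,x) is an injective map from Sym(Y) into Y; in particular Sym(Y) injects into Y. -/
theorem symetron_symetriseur_injects_into_Y_general {S : Type*}
    (s : S → S → S)
    (hs4 : ∀ x y, ∃! z, s x z = y)
    (Y : Set S) (y : S) (hy : y ∈ Y) :
    (∀ x ∈ {x : S | (fun u => s u x) '' Y = Y}, s y x ∈ Y) ∧
    Set.InjOn (fun x => s y x) {x : S | (fun u => s u x) '' Y = Y} :=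
  ⟨fun x hx => hx ▸ Set.mem_image_of_mem (fun u => s u x) hy,
    ((Function.bijective_iff_existsUnique (s y)).2 (hs4 y)).injective.injOn⟩

/-- In a symétron `(S,s)`, for `y ∈ Y` the map `x ↦ s(y,x)` sends
the symétriseur `Sym(Y)` injectively into `Y`; in particular `Sym(Y)` injects
into `Y`. -/
theorem symetron_symetriseur_injects_into_Y {S : Type*}
    (s : S → S → S)
    (hs1 : ∀ x, s x x = x)
    (hs2 : ∀ x y, s (s x y) y = x)
    (hs3 : ∀ x y z, s (s x z) (s y z) = s (s x y) z)
    (hs4 : ∀ x y, ∃! z, s x z = y)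
    (Y : Set S) (y : S) (hy : y ∈ Y) :
    (∀ x ∈ {x : S | (fun u => s u x) '' Y = Y}, s y x ∈ Y) ∧
    Set.InjOn (fun x => s y x) {x : S | (fun u => s u x) '' Y = Y} :=
  symetron_symetriseur_injects_into_Y_general s hs4 Y y hy
end

section
/- Let M be a structure in the first-order language with a single binary function symbol, whose interpretation s makes M a symétron, and assume there is no infinite strictly decreasing chain of definable convex subsets of M (this descending chain condition holds in every ω-stable symétron). Then every definable set A ⊆ M can be written as A = X_1 ∪ … ∪ X_n, where X_1, …, X_n are pairwise disjoint definable indecomposable sets. -/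
open FirstOrder

/-- The first-order language with a single binary function symbol. -/
def symLang : FirstOrder.Language where
  Functions := fun n => match n with
    | 2 => Unit
    | _ => Empty
  Relations := fun _ => Empty

/-- The `symLang`-structure on `M` where the binary function symbol is
interpreted by `s`. -/
def symStructure {M : Type*} (s : M → M → M) : symLang.Structure M where
  funMap {n} f x :=
    match n, f, x with
    | 2, _, x => s (x 0) (x 1)
  RelMap {n} r := r.elim

/-- A subset of `M` definable (with parameters from `M`) in the structure
interpreting the binary function symbol by `s`. -/
def IsDefSet {M : Type*} (s : M → M → M) (Y : Set M) : Prop :=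
  letI := symStructure s
  Set.Definable₁ (Set.univ : Set M) symLang Y

/-- A definable set `A` is indecomposable if whenever it is covered by finitely
many pairwise disjoint definable convex sets, it is contained in one of them. -/
def Indecomposable' {M : Type*} (s : M → M → M) (A : Set M) : Prop :=
  ∀ (n : ℕ) (X : Fin n → Set M),
    (∀ i, IsDefSet s (X i)) →
    (∀ i, ∀ u ∈ X i, ∀ v ∈ X i, s u v ∈ X i) →
    (Pairwise (Function.onFun Disjoint X)) →
    A ⊆ ⋃ i, X i → ∃ i, A ⊆ X i

/-!
By the descending chain condition we may argue by well-founded induction on a definable convex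
set `C` that every definable `A ⊆ C` is a disjoint union of definable indecomposable sets. If `A`
is not indecomposable, it is covered by pairwise disjoint definable convex sets `X₁, …, Xₙ`, none
of which contains `A`. Each piece `A ∩ Xᵢ` then lies in the definable convex set `C ∩ Xᵢ ⊊ C`,
so it decomposes by induction, and since the `Xᵢ` are disjoint these decompositions together form
one of `A`. (The empty set is not indecomposable: it is covered by the empty family, `n = 0`.)
-/

open Function

section

variable {M : Type*} {s : M → M → M}

def IsConvex (s : M → M → M) (Y : Set M) : Prop :=
  ∀ u ∈ Y, ∀ v ∈ Y, s u v ∈ Y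

theorem isConvex_univ : IsConvex s (Set.univ : Set M) :=
  fun _ _ _ _ => trivial

theorem IsConvex.inter {Y Z : Set M} (hY : IsConvex s Y) (hZ : IsConvex s Z) :
    IsConvex s (Y ∩ Z) :=
  fun _ hu _ hv => ⟨hY _ hu.1 _ hv.1, hZ _ hu.2 _ hv.2⟩

theorem isDefSet_univ : IsDefSet s (Set.univ : Set M) :=
  letI := symStructure s
  Set.definable_univ

theorem IsDefSet.inter {Y Z : Set M} (hY : IsDefSet s Y) (hZ : IsDefSet s Z) :
    IsDefSet s (Y ∩ Z) :=
  letI := symStructure s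
  Set.Definable.inter hY hZ

def HasIndecomposablePartition (s : M → M → M) (A : Set M) : Prop :=
  ∃ (n : ℕ) (X : Fin n → Set M), (∀ i, IsDefSet s (X i)) ∧ (∀ i, Indecomposable' s (X i)) ∧
    Pairwise (Disjoint on X) ∧ A = ⋃ i, X i

theorem hasIndecomposablePartition_of_finite {ι : Type*} [Finite ι] {A : Set M} (X : ι → Set M)
    (hdef : ∀ i, IsDefSet s (X i)) (hind : ∀ i, Indecomposable' s (X i))
    (hdisj : Pairwise (Disjoint on X)) (hA : A = ⋃ i, X i) :
    HasIndecomposablePartition s A := by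
  obtain ⟨n, ⟨e⟩⟩ := Finite.exists_equiv_fin ι
  refine ⟨n, X ∘ e.symm, fun _ => hdef _, fun _ => hind _,
    hdisj.comp_of_injective e.symm.injective, ?_⟩
  rw [hA, ← e.symm.surjective.iUnion_comp]
  rfl

theorem Indecomposable'.hasIndecomposablePartition {A : Set M} (hind : Indecomposable' s A)
    (hdef : IsDefSet s A) : HasIndecomposablePartition s A :=
  ⟨1, fun _ => A, fun _ => hdef, fun _ => hind, Subsingleton.pairwise, (Set.iUnion_const A).symm⟩

theorem HasIndecomposablePartition.iUnion {n : ℕ} {A X : Fin n → Set M} (hAX : ∀ i, A i ⊆ X i)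
    (hX : Pairwise (Disjoint on X)) (hA : ∀ i, HasIndecomposablePartition s (A i)) :
    HasIndecomposablePartition s (⋃ i, A i) := by
  choose m Y hdef hind hdisj hAY using hA
  have hYX : ∀ i k, Y i k ⊆ X i := fun i k =>
    (Set.subset_iUnion (Y i) k).trans ((hAY i).symm ▸ hAX i)
  refine hasIndecomposablePartition_of_finite (fun p : Σ i, Fin (m i) => Y p.1 p.2)
    (fun _ => hdef _ _) (fun _ => hind _ _) ?_ ?_
  · rintro ⟨i, k⟩ ⟨j, l⟩ hne
    obtain rfl | hij := eq_or_ne i j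
    · exact hdisj i (by rintro rfl; exact hne rfl)
    · exact (hX hij).mono (hYX i k) (hYX j l)
  · simp_rw [Set.iUnion_sigma, ← hAY]

theorem wellFoundedOn_ssubset_of_dcc
    (hdcc : ¬ ∃ f : ℕ → Set M, (∀ n, IsDefSet s (f n) ∧ IsConvex s (f n)) ∧
      ∀ n, f (n + 1) ⊂ f n) :
    {C : Set M | IsDefSet s C ∧ IsConvex s C}.WellFoundedOn (· ⊂ ·) :=
  wellFounded_iff_isEmpty_descending_chain.2
    ⟨fun ⟨f, hf⟩ => hdcc ⟨fun n => f n, fun n => (f n).2, hf⟩⟩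

theorem hasIndecomposablePartition_of_subset
    (hwf : {C : Set M | IsDefSet s C ∧ IsConvex s C}.WellFoundedOn (· ⊂ ·)) {C : Set M}
    (hC : IsDefSet s C ∧ IsConvex s C) :
    ∀ A, IsDefSet s A → A ⊆ C → HasIndecomposablePartition s A := by
  refine hwf.induction (P := fun C => ∀ A, IsDefSet s A → A ⊆ C → HasIndecomposablePartition s A)
    hC ?_
  rintro C ⟨hCdef, hCconv⟩ ih A hAdef hAC
  by_cases hind : Indecomposable' s A
  · exact hind.hasIndecomposablePartition hAdef
  simp only [Indecomposable', not_forall, not_exists] at hind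
  obtain ⟨n, X, hXdef, hXconv, hXdisj, hAX, hAnX⟩ := hind
  rw [← Set.inter_eq_left.2 hAX, Set.inter_iUnion]
  refine HasIndecomposablePartition.iUnion (fun i => Set.inter_subset_right) hXdisj fun i => ?_
  exact ih (C ∩ X i) ⟨hCdef.inter (hXdef i), hCconv.inter (hXconv i)⟩
    (Set.inter_ssubset_left_iff.2 fun hCX => hAnX i (hAC.trans hCX))
    _ (hAdef.inter (hXdef i)) (Set.inter_subset_inter_left _ hAC)

end

theorem symetron_decomposition_into_indecomposables_general {M : Type*}
    (s : M → M → M)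
    -- DCC: no infinite strictly decreasing chain of definable convex subsets
    (hdcc : ¬ ∃ f : ℕ → Set M,
      (∀ n, IsDefSet s (f n) ∧ ∀ u ∈ f n, ∀ v ∈ f n, s u v ∈ f n) ∧
      ∀ n, f (n + 1) ⊂ f n)
    (A : Set M)
    (hAdef : IsDefSet s A) :
    ∃ (n : ℕ) (X : Fin n → Set M),
      (∀ i, IsDefSet s (X i)) ∧
      (∀ i, Indecomposable' s (X i)) ∧
      (Pairwise (Function.onFun Disjoint X)) ∧
      A = ⋃ i, X i :=
  hasIndecomposablePartition_of_subset (wellFoundedOn_ssubset_of_dcc hdcc)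
    ⟨isDefSet_univ, isConvex_univ⟩ A hAdef (Set.subset_univ A)

/-- In a symétron `M` (as a first-order structure in the language
with one binary function symbol) satisfying the descending chain condition on
definable convex subsets, every definable set is a finite union of pairwise
disjoint definable indecomposable sets. -/
theorem symetron_decomposition_into_indecomposables {M : Type*}
    (s : M → M → M)
    (hs1 : ∀ x, s x x = x)
    (hs2 : ∀ x y, s (s x y) y = x)
    (hs3 : ∀ x y z, s (s x z) (s y z) = s (s x y) z)
    (hs4 : ∀ x y, ∃! z, s x z = y)
    -- DCC: no infinite strictly decreasing chain of definable convex subsets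
    (hdcc : ¬ ∃ f : ℕ → Set M,
      (∀ n, IsDefSet s (f n) ∧ ∀ u ∈ f n, ∀ v ∈ f n, s u v ∈ f n) ∧
      ∀ n, f (n + 1) ⊂ f n)
    (A : Set M)
    (hAdef : IsDefSet s A) :
    ∃ (n : ℕ) (X : Fin n → Set M),
      (∀ i, IsDefSet s (X i)) ∧
      (∀ i, Indecomposable' s (X i)) ∧
      (Pairwise (Function.onFun Disjoint X)) ∧
      A = ⋃ i, X i :=
  symetron_decomposition_into_indecomposables_general s hdcc A hAdef
end
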